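/- Any triangulation of a convex polygon on n+2 points contains at most one t-gonal tiling as a subgraph. -/

import Mathlib

/-- A plane (non-crossing) perfect matching on the `2n` points `0, …, 2n-1`
in convex position. -/
structure NCMatching (n : ℕ) where
  pairs : Finset (ℕ × ℕ)
  mem_lt : ∀ p ∈ pairs, p.1 < p.2 ∧ p.2 < 2 * n
  covers : ∀ v, v < 2 * n → ∃! p, p ∈ pairs ∧ (p.1 = v ∨ p.2 = v)
  noncross : ∀ p ∈ pairs, ∀ q ∈ pairs, ¬ (p.1 < q.1 ∧ q.1 < p.2 ∧ p.2 < q.2)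

/-- Outdegree of vertex `v` (1 if `v` is matched to a larger vertex, else 0). -/
def NCMatching.out {n : ℕ} (M : NCMatching n) (v : ℕ) : ℕ :=
  (M.pairs.filter fun p => p.1 = v).card

/-- The outdegree sequence `(b_1, …, b_{2n})` of a matching. -/
def NCMatching.outList {n : ℕ} (M : NCMatching n) : List ℕ :=
  (List.range (2 * n)).map M.out

/-- A triangulation of the convex polygon with vertices `0, …, n+1` in convex
position: a maximal set of pairwise non-crossing diagonals (`n-1` many). -/
structure Triangulation (n : ℕ) where
  diag : Finset (ℕ × ℕ)
  isDiag : ∀ e ∈ diag, e.1 + 2 ≤ e.2 ∧ e.2 ≤ n + 1 ∧ ¬(e.1 = 0 ∧ e.2 = n + 1)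
  noncross : ∀ e ∈ diag, ∀ f ∈ diag, ¬ (e.1 < f.1 ∧ f.1 < e.2 ∧ e.2 < f.2)
  card_diag : diag.card = n - 1

/-- Outdegree of point `i` in a triangulation: edges are directed from lower to
higher index; hull edges are not counted, except `p_1 p_{n+2}` (counted at `0`). -/
def Triangulation.out {n : ℕ} (T : Triangulation n) (i : ℕ) : ℕ :=
  (T.diag.filter fun e => e.1 = i).card + (if i = 0 then 1 else 0)

/-- The outdegree sequence `(d_1, …, d_n)` of a triangulation. -/
def Triangulation.outList {n : ℕ} (T : Triangulation n) : List ℕ :=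
  (List.range n).map T.out

/-- Ballot sequences of length `2n`: 0/1 sequences with `n` ones whose every
prefix has at least as many ones as zeros. -/
def IsBallot (n : ℕ) (l : List ℕ) : Prop :=
  l.length = 2 * n ∧ (∀ x ∈ l, x = 0 ∨ x = 1) ∧ l.sum = n ∧
    ∀ m, m ≤ 2 * n → m ≤ 2 * (l.take m).sum

/-- Valid outdegree sequences of triangulations of a convex `(n+2)`-gon. -/
def IsTriDeg (n : ℕ) (d : List ℕ) : Prop :=
  d.length = n ∧ d.sum = n ∧ ∀ l, l ≤ n → (d.reverse.take l).sum ≤ l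

/-- From a degree sequence `(d_1,…,d_n)` to the ballot sequence consisting of
`d_i` ones followed by a zero, for each `i`. -/
def degToBallot (d : List ℕ) : List ℕ :=
  (d.map fun x => List.replicate x 1 ++ [0]).flatten

/-- From a ballot sequence `B` to the sequence `(d_1,…,d_n)` where `d_i` is the
number of ones between the `(i-1)`-st and the `i`-th zero of `B`. -/
def ballotToDeg (B : List ℕ) : List ℕ :=
  ((B.splitOn 0).map List.length).dropLast

/-- The bitonic `k`-coloring `c_1,…,c_k,c_k,…,c_1,c_1,…` of the vertices. -/
def bitColor (k i : ℕ) : ℕ :=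
  if (i / k) % 2 = 0 then i % k else k - 1 - i % k

/-- A perfect `k`-colored (monochromatic) matching: every edge joins two
vertices of the same color. -/
def Mono (k : ℕ) {n : ℕ} (M : NCMatching n) : Prop :=
  ∀ p ∈ M.pairs, bitColor k p.1 = bitColor k p.2

/-- Valid block structure: within each block of `k` consecutive vertices, every
vertex with an outgoing edge is followed only by vertices with outgoing edges. -/
def ValidBlock (k : ℕ) {n : ℕ} (M : NCMatching n) : Prop :=
  ∀ u v, v < 2 * n → u / k = v / k → u < v → M.out u = 1 → M.out v = 1

/-- The hull edges of the convex polygon on `0, …, n+1`. -/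
def hullEdges (n : ℕ) : Finset (ℕ × ℕ) :=
  ((Finset.range (n + 1)).image fun i => (i, i + 1)) ∪ {(0, n + 1)}

/-- The edges of the face with vertex set `S` (in convex position): consecutive
pairs of `S` together with the pair `(min S, max S)`. -/
def faceEdges (S : Finset ℕ) : Finset (ℕ × ℕ) :=
  (S ×ˢ S).filter fun p => p.1 < p.2 ∧
    ((∀ c ∈ S, ¬ (p.1 < c ∧ c < p.2)) ∨ (∀ c ∈ S, p.1 ≤ c ∧ c ≤ p.2))

/-- A `t`-gonal tiling of the convex polygon on the points `0, …, n+1`: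
a plane graph all of whose bounded faces are `t`-gons, given by its set of
(bounded) faces. -/
structure Tiling (t n : ℕ) where
  faces : Finset (Finset ℕ)
  sub : ∀ S ∈ faces, S ⊆ Finset.range (n + 2)
  size : ∀ S ∈ faces, S.card = t
  noncross : ∀ S ∈ faces, ∀ S' ∈ faces, ∀ e ∈ faceEdges S, ∀ e' ∈ faceEdges S',
      ¬ (e.1 < e'.1 ∧ e'.1 < e.2 ∧ e.2 < e'.2)
  share : ∀ S ∈ faces, ∀ S' ∈ faces, S ≠ S' → (S ∩ S').card ≤ 2
  boundary : ∀ e ∈ hullEdges n, (faces.filter fun S => e ∈ faceEdges S).card = 1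
  interior : ∀ S ∈ faces, ∀ e ∈ faceEdges S, e ∉ hullEdges n →
      (faces.filter fun S' => e ∈ faceEdges S').card = 2

/-- The dual graph of a tiling: one vertex per bounded face, two faces adjacent
iff they share a common edge. -/
def dualGraph {t n : ℕ} (T : Tiling t n) : SimpleGraph {S // S ∈ T.faces} where
  Adj A B := A ≠ B ∧ (faceEdges A.1 ∩ faceEdges B.1).Nonempty
  symm := by
    constructor
    rintro A B ⟨h1, h2⟩
    exact ⟨Ne.symm h1, by rwa [Finset.inter_comm]⟩
  loopless := by constructor; rintro A ⟨h, -⟩; exact h rfl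

/-- An ear of a tiling: a face all but one of whose edges lie on the hull. -/
def IsEar {t n : ℕ} (T : Tiling t n) (S : Finset ℕ) : Prop :=
  S ∈ T.faces ∧ (faceEdges S \ hullEdges n).card = 1

/-- A tiling is a subgraph of a triangulation if each of its non-hull edges is
a diagonal of the triangulation. -/
def SubTri {t n : ℕ} (T : Tiling t n) (𝒯 : Triangulation n) : Prop :=
  ∀ S ∈ T.faces, ∀ e ∈ faceEdges S, e ∉ hullEdges n → e ∈ 𝒯.diag

/-- A triangulation is `k`-color valid if, under the outdegree-sequence
bijection, it corresponds to a perfect `k`-colored matching. -/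
def KColorValidTri (k : ℕ) {n : ℕ} (𝒯 : Triangulation n) : Prop :=
  ∃ M : NCMatching n, Mono k M ∧ M.outList = degToBallot 𝒯.outList

/-- A `(k+2)`-gonal tiling is `k`-color valid if it is a subgraph of some
`k`-color valid triangulation. -/
def KColorValidTiling (k : ℕ) {n : ℕ} (T : Tiling (k + 2) n) : Prop :=
  ∃ 𝒯 : Triangulation n, KColorValidTri k 𝒯 ∧ SubTri T 𝒯

/-!
Every edge `(a, b)` of a `t`-gonal tiling cuts off `b - a - 1 ≡ 0 (mod t - 2)` vertices of the
polygon: the region beyond it is tiled by `t`-gons, and each of them adds `t - 2` vertices.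
Conversely, a chord `(a, b)` with this property that crosses no edge of a tiling is spanned by
one of its faces; otherwise it would cut across a face `S`, separating between `1` and `t - 3`
vertices of `S`, against the congruences along the edges of `S`. If `T₁` and `T₂` lie in a
common triangulation, their edges do not cross, so the chord joining the extreme vertices of
a face of `T₁` is spanned by a face of `T₂`. Two such faces coincide: at the first vertex
where they differ, an edge of one of them would cut off between `1` and `t - 3` vertices of
the other.
-/

open Finset

def Consecutive (S : Finset ℕ) (u v : ℕ) : Prop :=
  u ∈ S ∧ v ∈ S ∧ u < v ∧ ∀ z ∈ S, z ≤ u ∨ v ≤ z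

def Spans (S : Finset ℕ) (a b : ℕ) : Prop :=
  a ∈ S ∧ b ∈ S ∧ S ⊆ Icc a b

def Crosses (e f : ℕ × ℕ) : Prop :=
  e.1 < f.1 ∧ f.1 < e.2 ∧ e.2 < f.2

def Separates (e : ℕ × ℕ) (x y : ℕ) : Prop :=
  e.1 < x ∧ x < e.2 ∧ (y < e.1 ∨ e.2 < y)

theorem of_mem_faceEdges {S : Finset ℕ} {e : ℕ × ℕ} (he : e ∈ faceEdges S) :
    e.1 ∈ S ∧ e.2 ∈ S ∧ e.1 < e.2 := by
  obtain ⟨hmem, hlt, -⟩ := mem_filter.1 he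
  exact ⟨(mem_product.1 hmem).1, (mem_product.1 hmem).2, hlt⟩

theorem mem_faceEdges {S : Finset ℕ} {a b : ℕ} :
    (a, b) ∈ faceEdges S ↔ Consecutive S a b ∨ (a < b ∧ Spans S a b) := by
  simp only [faceEdges, mem_filter, mem_product, Consecutive, Spans, subset_iff, mem_Icc]
  constructor
  · rintro ⟨⟨ha, hb⟩, hab, hgap | hspan⟩
    · exact Or.inl ⟨ha, hb, hab, fun z hz => by have := hgap z hz; omega⟩
    · exact Or.inr ⟨hab, ha, hb, fun z hz => hspan z hz⟩
  · rintro (⟨ha, hb, hab, hgap⟩ | ⟨hab, ha, hb, hspan⟩)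
    · exact ⟨⟨ha, hb⟩, hab, Or.inl fun z hz => by have := hgap z hz; omega⟩
    · exact ⟨⟨ha, hb⟩, hab, Or.inr fun z hz => hspan hz⟩

theorem Consecutive.mem_faceEdges {S : Finset ℕ} {u v : ℕ} (h : Consecutive S u v) :
    (u, v) ∈ faceEdges S :=
  _root_.mem_faceEdges.2 (Or.inl h)

theorem Spans.mem_faceEdges {S : Finset ℕ} {a b : ℕ} (h : Spans S a b) (hab : a < b) :
    (a, b) ∈ faceEdges S :=
  _root_.mem_faceEdges.2 (Or.inr ⟨hab, h⟩)

theorem mem_hullEdges {n a b : ℕ} :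
    (a, b) ∈ hullEdges n ↔ (a ≤ n ∧ b = a + 1) ∨ (a = 0 ∧ b = n + 1) := by
  simp only [hullEdges, mem_union, mem_image, mem_range, mem_singleton, Prod.ext_iff]
  constructor
  · rintro (⟨i, hi, rfl, rfl⟩ | h)
    · exact Or.inl ⟨by omega, rfl⟩
    · exact Or.inr h
  · rintro (⟨ha, rfl⟩ | h)
    · exact Or.inl ⟨a, by omega, rfl, rfl⟩
    · exact Or.inr h

theorem Consecutive.exists_lt_or_lt {S : Finset ℕ} {u v : ℕ} (h : Consecutive S u v)
    (hS : 2 < #S) : ∃ z ∈ S, z < u ∨ v < z := by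
  by_contra! hz
  have hsub : S ⊆ {u, v} := fun z hzS => by
    have := hz z hzS
    rcases h.2.2.2 z hzS with h' | h' <;> simp <;> omega
  have := card_le_card hsub
  have := card_le_two (a := u) (b := v)
  omega

theorem exists_consecutive_between {S : Finset ℕ} {x y a b : ℕ} (hx : x ∈ S) (hy : y ∈ S)
    (hxa : x ≤ a) (hab : a < b) (hby : b ≤ y) (hgap : ∀ z ∈ S, z ≤ a ∨ b ≤ z) :
    ∃ p q, Consecutive S p q ∧ x ≤ p ∧ p ≤ a ∧ b ≤ q ∧ q ≤ y := by
  have hxL : x ∈ S.filter (· ≤ a) := mem_filter.2 ⟨hx, hxa⟩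
  have hyR : y ∈ S.filter (b ≤ ·) := mem_filter.2 ⟨hy, hby⟩
  obtain ⟨hpS, hpa⟩ := mem_filter.1 ((S.filter (· ≤ a)).max'_mem ⟨x, hxL⟩)
  obtain ⟨hqS, hbq⟩ := mem_filter.1 ((S.filter (b ≤ ·)).min'_mem ⟨y, hyR⟩)
  refine ⟨_, _, ⟨hpS, hqS, by omega, fun z hz => ?_⟩, le_max' _ x hxL, hpa, hbq,
    min'_le _ y hyR⟩
  rcases hgap z hz with h | h
  · exact Or.inl (le_max' _ z (mem_filter.2 ⟨hz, h⟩))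
  · exact Or.inr (min'_le _ z (mem_filter.2 ⟨hz, h⟩))

theorem exists_consecutive_around {S : Finset ℕ} {x y c : ℕ} (hx : x ∈ S) (hy : y ∈ S)
    (hxc : x < c) (hcy : c < y) (hc : c ∉ S) :
    ∃ p q, Consecutive S p q ∧ x ≤ p ∧ p < c ∧ c < q ∧ q ≤ y := by
  obtain ⟨p, q, hpq, hxp, hpc, hcq, hqy⟩ :=
    exists_consecutive_between hx hy hxc.le (lt_add_one c) hcy (fun z _ => by omega)
  have hpc' : p ≠ c := fun h => hc (h ▸ hpq.1)
  exact ⟨p, q, hpq, hxp, by omega, by omega, hqy⟩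

theorem modEq_add_card_Ioc {d : ℕ} {S : Finset ℕ}
    (hgap : ∀ p q, Consecutive S p q → q ≡ p + 1 [MOD d]) {a : ℕ} (ha : a ∈ S) :
    ∀ b ∈ S, a ≤ b → b ≡ a + #(S ∩ Ioc a b) [MOD d] := by
  intro b
  induction b using Nat.strong_induction_on with
  | _ b ih =>
  intro hb hab
  rcases hab.eq_or_lt with rfl | hab
  · simpa using Nat.ModEq.refl a
  obtain ⟨p, q, hpq, hap, hpb, hbq, hqb⟩ :=
    exists_consecutive_between ha hb (Nat.le_sub_one_of_lt hab) (Nat.sub_one_lt_of_lt hab)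
      le_rfl (fun z _ => by omega)
  obtain rfl : q = b := le_antisymm hqb hbq
  have hIoc : S ∩ Ioc a q = insert q (S ∩ Ioc a p) := by
    ext z
    simp only [mem_inter, mem_Ioc, mem_insert]
    constructor
    · rintro ⟨hz, haz, hzq⟩
      rcases hzq.eq_or_lt with rfl | hzq
      · exact Or.inl rfl
      · exact Or.inr ⟨hz, haz, by have := hpq.2.2.2 z hz; omega⟩
    · rintro (rfl | ⟨hz, haz, hzp⟩)
      · exact ⟨hb, hab, le_rfl⟩
      · exact ⟨hz, haz, by omega⟩
  rw [hIoc, card_insert_of_notMem (by simp only [mem_inter, mem_Ioc]; omega)]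
  calc q ≡ p + 1 [MOD d] := hgap p q hpq
    _ ≡ a + #(S ∩ Ioc a p) + 1 [MOD d] := (ih p (by omega) hpq.1 hap).add_right 1
    _ = a + (#(S ∩ Ioc a p) + 1) := by ring

/-- The boundary of `P` passes from one side of `e` to the other twice, each time through an
endpoint of `e`: otherwise the edge of `P` around that endpoint, or `(min P, max P)`, crosses `e`. -/
theorem mem_of_separates {P : Finset ℕ} {e : ℕ × ℕ}
    (hP : ∀ f ∈ faceEdges P, ¬Crosses e f ∧ ¬Crosses f e) {x y : ℕ} (hx : x ∈ P) (hy : y ∈ P)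
    (hxy : Separates e x y ∨ Separates e y x) : e.1 ∈ P ∧ e.2 ∈ P := by
  wlog hsep : Separates e x y generalizing x y
  · exact this hy hx hxy.symm (hxy.resolve_left hsep)
  obtain ⟨α, β⟩ := e
  obtain ⟨hαx, hxβ, hy'⟩ := hsep
  dsimp only at hαx hxβ hy' ⊢
  have hne : P.Nonempty := ⟨x, hx⟩
  have hmx := P.min'_le x hx
  have hmy := P.min'_le y hy
  have hxM := P.le_max' x hx
  have hyM := P.le_max' y hy
  have hlong : (P.min' hne, P.max' hne) ∈ faceEdges P :=
    Spans.mem_faceEdges ⟨P.min'_mem hne, P.max'_mem hne,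
      fun z hz => mem_Icc.2 ⟨P.min'_le z hz, P.le_max' z hz⟩⟩ (by omega)
  constructor
  · by_contra hα
    by_cases hleft : ∃ z ∈ P, z < α
    · obtain ⟨z, hz, hzα⟩ := hleft
      obtain ⟨p, q, hpq, -, hpα, hαq, hqx⟩ := exists_consecutive_around hz hx hzα hαx hα
      exact (hP _ hpq.mem_faceEdges).2 ⟨hpα, hαq, by dsimp only; omega⟩
    · push Not at hleft
      have hαm : α < P.min' hne := lt_of_le_of_ne (hleft _ (P.min'_mem hne))
        fun h => hα (h ▸ P.min'_mem hne)
      have := hleft y hy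
      exact (hP _ hlong).1 ⟨hαm, by dsimp only; omega, by dsimp only; omega⟩
  · by_contra hβ
    by_cases hright : ∃ z ∈ P, β < z
    · obtain ⟨z, hz, hβz⟩ := hright
      obtain ⟨p, q, hpq, hxp, hpβ, hβq, -⟩ := exists_consecutive_around hx hz hxβ hβz hβ
      exact (hP _ hpq.mem_faceEdges).1 ⟨by dsimp only; omega, hpβ, hβq⟩
    · push Not at hright
      have hMβ : P.max' hne < β := lt_of_le_of_ne (hright _ (P.max'_mem hne))
        fun h => hβ (h ▸ P.max'_mem hne)
      have := hright y hy
      exact (hP _ hlong).2 ⟨by dsimp only; omega, by dsimp only; omega, hMβ⟩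

theorem exists_separating_edge {S : Finset ℕ} {x : ℕ} (hx : x ∉ S) (hS : 1 < #S) :
    ∃ e ∈ faceEdges S, ∀ z ∈ S, z ≠ e.1 → z ≠ e.2 → Separates e x z ∨ Separates e z x := by
  have hne : S.Nonempty := card_pos.1 (by omega)
  have hmM := S.min'_lt_max'_of_card hS
  by_cases hinside : S.min' hne < x ∧ x < S.max' hne
  · obtain ⟨p, q, hpq, -, hpx, hxq, -⟩ :=
      exists_consecutive_around (S.min'_mem hne) (S.max'_mem hne) hinside.1 hinside.2 hx
    refine ⟨(p, q), hpq.mem_faceEdges, fun z hz hzp hzq => Or.inl ⟨hpx, hxq, ?_⟩⟩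
    have := hpq.2.2.2 z hz
    dsimp only at hzp hzq ⊢
    omega
  · have hxm : x ≠ S.min' hne := fun h => hx (h ▸ S.min'_mem hne)
    have hxM : x ≠ S.max' hne := fun h => hx (h ▸ S.max'_mem hne)
    refine ⟨_, Spans.mem_faceEdges ⟨S.min'_mem hne, S.max'_mem hne,
      fun z hz => mem_Icc.2 ⟨S.min'_le z hz, S.le_max' z hz⟩⟩ hmM,
      fun z hz hzm hzM => Or.inr ⟨?_, ?_, by omega⟩⟩
    · exact lt_of_le_of_ne (S.min'_le z hz) (Ne.symm hzm)
    · exact lt_of_le_of_ne (S.le_max' z hz) hzM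

/-- An edge of `S` separating a vertex of `P` outside `[u, v]` from the rest of `S` has both
endpoints in `P`, hence is `(u, v)`; but `(u, v)` separates nothing outside `[u, v]` from `S`. -/
theorem subset_Icc_of_consecutive {S P : Finset ℕ}
    (hSP : ∀ e ∈ faceEdges S, ∀ f ∈ faceEdges P, ¬Crosses e f ∧ ¬Crosses f e) (hS : 2 < #S)
    {u v : ℕ} (huv : Consecutive S u v) (huP : u ∈ P) (hvP : v ∈ P)
    (hcommon : ∀ w ∈ S, w ∈ P → w = u ∨ w = v) : P ⊆ Icc u v := by
  have hlt := huv.2.2.1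
  intro x hxP
  rw [mem_Icc]
  by_contra hx
  have hxS : x ∉ S := fun hxS => by rcases hcommon x hxS hxP with rfl | rfl <;> omega
  obtain ⟨⟨α, β⟩, he, hsep⟩ := exists_separating_edge hxS (by omega)
  obtain ⟨hαS, hβS, hαβ⟩ := of_mem_faceEdges he
  dsimp only at hαS hβS hαβ hsep
  have hends : α = u ∧ β = v := by
    have hcommon_ends (h : α ∈ P ∧ β ∈ P) : α = u ∧ β = v := by
      have := hcommon α hαS h.1
      have := hcommon β hβS h.2
      omega
    by_cases hu : u ≠ α ∧ u ≠ β
    · exact hcommon_ends (mem_of_separates (hSP _ he) hxP huP (hsep u huv.1 hu.1 hu.2))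
    by_cases hv : v ≠ α ∧ v ≠ β
    · exact hcommon_ends (mem_of_separates (hSP _ he) hxP hvP (hsep v huv.2.1 hv.1 hv.2))
    omega
  obtain ⟨rfl, rfl⟩ := hends
  obtain ⟨z, hz, hzuv⟩ := huv.exists_lt_or_lt hS
  have hzsep := hsep z hz (by omega) (by omega)
  simp only [Separates] at hzsep
  omega

namespace Tiling

variable {t n : ℕ} (T : Tiling t n)

theorem le_of_mem {S : Finset ℕ} (hS : S ∈ T.faces) {z : ℕ} (hz : z ∈ S) : z ≤ n + 1 :=
  Nat.lt_succ_iff.1 (mem_range.1 (T.sub S hS hz))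

theorem exists_face_spans_zero : ∃ S ∈ T.faces, Spans S 0 (n + 1) := by
  have hone := T.boundary (0, n + 1) (mem_hullEdges.2 (Or.inr ⟨rfl, rfl⟩))
  obtain ⟨S, hS⟩ := card_pos.1 (hone ▸ Nat.one_pos)
  obtain ⟨hSf, hSe⟩ := mem_filter.1 hS
  obtain ⟨h0, hn, -⟩ := of_mem_faceEdges hSe
  exact ⟨S, hSf, h0, hn, fun z hz => mem_Icc.2 ⟨Nat.zero_le z, T.le_of_mem hSf hz⟩⟩

theorem exists_face_spans_of_consecutive (ht : 3 ≤ t) {S : Finset ℕ} (hS : S ∈ T.faces)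
    {u v : ℕ} (huv : Consecutive S u v) (hlen : u + 1 < v) :
    ∃ P ∈ T.faces, Spans P u v := by
  have hcard : 2 < #S := by rw [T.size S hS]; omega
  have hinterior : (u, v) ∉ hullEdges n := by
    obtain ⟨z, hz, hzuv⟩ := huv.exists_lt_or_lt hcard
    have := T.le_of_mem hS hz
    rw [mem_hullEdges]
    omega
  have htwo := T.interior S hS _ huv.mem_faceEdges hinterior
  obtain ⟨P, hP, hPS⟩ := exists_mem_ne (htwo ▸ one_lt_two) S
  obtain ⟨hPf, hPe⟩ := mem_filter.1 hP
  obtain ⟨huP, hvP, -⟩ := of_mem_faceEdges hPe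
  have hSP : S ∩ P = {u, v} := by
    refine (eq_of_subset_of_card_le ?_ ?_).symm
    · intro w hw
      simp only [mem_insert, mem_singleton] at hw
      rcases hw with rfl | rfl
      exacts [mem_inter.2 ⟨huv.1, huP⟩, mem_inter.2 ⟨huv.2.1, hvP⟩]
    · rw [card_pair huv.2.2.1.ne]
      exact T.share S hS P hPf hPS.symm
  have hcommon (w : ℕ) (hwS : w ∈ S) (hwP : w ∈ P) : w = u ∨ w = v := by
    simpa [hSP] using mem_inter.2 ⟨hwS, hwP⟩
  exact ⟨P, hPf, huP, hvP, subset_Icc_of_consecutive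
    (fun e he f hf => ⟨T.noncross S hS P hPf e he f hf, T.noncross P hPf S hS f hf e he⟩)
    hcard huv huP hvP hcommon⟩

theorem modEq_of_spans (ht : 3 ≤ t) {S : Finset ℕ} (hS : S ∈ T.faces) {a b : ℕ}
    (hspan : Spans S a b) : b ≡ a + 1 [MOD t - 2] := by
  induction h : b - a using Nat.strong_induction_on generalizing S a b with
  | _ k ih =>
  have hcard := T.size S hS
  have hgap (p q : ℕ) (hpq : Consecutive S p q) : q ≡ p + 1 [MOD t - 2] := by
    rcases (Nat.succ_le_of_lt hpq.2.2.1).eq_or_lt with hq | hq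
    · rw [← hq]
    obtain ⟨P, hP, hPspan⟩ := T.exists_face_spans_of_consecutive ht hS hpq hq
    obtain ⟨z, hz, hzpq⟩ := hpq.exists_lt_or_lt (by omega)
    have := mem_Icc.1 (hspan.2.2 hz)
    have := mem_Icc.1 (hspan.2.2 hpq.1)
    have := mem_Icc.1 (hspan.2.2 hpq.2.1)
    exact ih (q - p) (by omega) hP hPspan rfl
  have hIoc : S ∩ Ioc a b = S.erase a := by
    ext z
    simp only [mem_inter, mem_Ioc, mem_erase]
    constructor
    · rintro ⟨hz, haz, -⟩
      exact ⟨haz.ne', hz⟩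
    · rintro ⟨hza, hz⟩
      have := mem_Icc.1 (hspan.2.2 hz)
      exact ⟨hz, by omega, this.2⟩
  have hab := (mem_Icc.1 (hspan.2.2 hspan.2.1)).1
  have hsum := modEq_add_card_Ioc hgap hspan.1 b hspan.2.1 hab
  rw [hIoc, card_erase_of_mem hspan.1, hcard] at hsum
  calc b ≡ a + (t - 1) [MOD t - 2] := hsum
    _ = a + 1 + (t - 2) := by omega
    _ ≡ a + 1 [MOD t - 2] := Nat.add_modEq_right

theorem modEq_of_mem_faceEdges (ht : 3 ≤ t) {S : Finset ℕ} (hS : S ∈ T.faces) {a b : ℕ}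
    (he : (a, b) ∈ faceEdges S) : b ≡ a + 1 [MOD t - 2] := by
  rcases mem_faceEdges.1 he with hab | ⟨-, hspan⟩
  · rcases (Nat.succ_le_of_lt hab.2.2.1).eq_or_lt with hb | hb
    · rw [← hb]
    obtain ⟨P, hP, hPspan⟩ := T.exists_face_spans_of_consecutive ht hS hab hb
    exact T.modEq_of_spans ht hP hPspan
  · exact T.modEq_of_spans ht hS hspan

/-- Summing the congruences along the edges of `S` from `a` to `b` gives
`b ≡ a + 1 + #(S ∩ Ioo a b)`, so `t - 2` divides `#(S ∩ Ioo a b) ≤ t - 2`. -/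
theorem subset_Icc_of_modEq (ht : 3 ≤ t) {S : Finset ℕ} (hS : S ∈ T.faces) {a b z : ℕ}
    (ha : a ∈ S) (hb : b ∈ S) (hz : z ∈ S) (haz : a < z) (hzb : z < b)
    (hmod : b ≡ a + 1 [MOD t - 2]) : S ⊆ Icc a b := by
  have hsum := modEq_add_card_Ioc
    (fun p q hpq => T.modEq_of_mem_faceEdges ht hS hpq.mem_faceEdges) ha b hb (by omega)
  set r := #(S ∩ Ioc a b)
  have hr : 1 ≡ r [MOD t - 2] := Nat.ModEq.add_left_cancel' a (hmod.symm.trans hsum)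
  have hsub : S ∩ Ioc a b ⊆ S.erase a := fun w hw => by
    obtain ⟨hwS, hw⟩ := mem_inter.1 hw
    exact mem_erase.2 ⟨(mem_Ioc.1 hw).1.ne', hwS⟩
  have hr_le : r ≤ t - 1 := by
    simpa [card_erase_of_mem ha, T.size S hS] using card_le_card hsub
  have hr_two : 2 ≤ r := by
    have hzb_sub : ({z, b} : Finset ℕ) ⊆ S ∩ Ioc a b := by
      intro w hw
      simp only [mem_insert, mem_singleton] at hw
      rcases hw with rfl | rfl
      exacts [mem_inter.2 ⟨hz, mem_Ioc.2 ⟨haz, hzb.le⟩⟩, mem_inter.2 ⟨hb, mem_Ioc.2 ⟨by omega, le_rfl⟩⟩]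
    simpa [card_pair hzb.ne] using card_le_card hzb_sub
  have hdvd : t - 2 ∣ r - 1 := (Nat.modEq_iff_dvd' (by omega)).1 hr
  have := Nat.le_of_dvd (by omega) hdvd
  have hfull : S ∩ Ioc a b = S.erase a :=
    eq_of_subset_of_card_le hsub (by rw [card_erase_of_mem ha, T.size S hS]; omega)
  intro w hw
  by_cases hwa : w = a
  · subst hwa
    exact mem_Icc.2 ⟨le_rfl, by omega⟩
  · have := mem_Ioc.1 (mem_inter.1 (hfull ▸ mem_erase.2 ⟨hwa, hw⟩)).2
    exact mem_Icc.2 ⟨this.1.le, this.2⟩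

/-- Descend from the face on the hull edge `(0, n + 1)`: a face spanning `[A, B] ⊋ [a, b]` has no
vertex strictly between `a` and `b`, so the face across one of its edges spans a smaller interval
containing `[a, b]`. -/
theorem exists_face_spans_of_chord (ht : 3 ≤ t) {a b : ℕ} (hab : a + 2 ≤ b) (hbn : b ≤ n + 1)
    (hchord : ∀ S ∈ T.faces, ∀ f ∈ faceEdges S, ¬Crosses (a, b) f ∧ ¬Crosses f (a, b))
    (hmod : b ≡ a + 1 [MOD t - 2]) : ∃ P ∈ T.faces, Spans P a b := by
  suffices H : ∀ k, ∀ S ∈ T.faces, ∀ A B, Spans S A B → B - A = k → A ≤ a → b ≤ B →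
      ∃ P ∈ T.faces, Spans P a b by
    obtain ⟨S, hS, hspan⟩ := T.exists_face_spans_zero
    exact H _ S hS 0 (n + 1) hspan rfl (Nat.zero_le a) hbn
  intro k
  induction k using Nat.strong_induction_on with
  | _ k ih =>
  intro S hS A B hspan hk hAa hbB
  by_cases hend : a = A ∧ b = B
  · obtain ⟨rfl, rfl⟩ := hend
    exact ⟨S, hS, hspan⟩
  have hgap : ∀ z ∈ S, z ≤ a ∨ b ≤ z := by
    intro z hz
    by_contra! hz'
    have hout : Separates (a, b) z A ∨ Separates (a, b) z B := by
      simp only [Separates]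
      omega
    have hends : a ∈ S ∧ b ∈ S := by
      rcases hout with h | h
      · exact mem_of_separates (hchord S hS) hz hspan.1 (Or.inl h)
      · exact mem_of_separates (hchord S hS) hz hspan.2.1 (Or.inl h)
    have hsub := T.subset_Icc_of_modEq ht hS hends.1 hends.2 hz hz'.1 hz'.2 hmod
    have := mem_Icc.1 (hsub hspan.1)
    have := mem_Icc.1 (hsub hspan.2.1)
    omega
  obtain ⟨u, v, huv, hAu, hua, hbv, hvB⟩ :=
    exists_consecutive_between hspan.1 hspan.2.1 hAa (by omega) hbB hgap
  obtain ⟨P, hP, hPspan⟩ := T.exists_face_spans_of_consecutive ht hS huv (by omega)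
  obtain ⟨z, hz, hzuv⟩ := huv.exists_lt_or_lt (by rw [T.size S hS]; omega)
  have := mem_Icc.1 (hspan.2.2 hz)
  exact ih (v - u) (by omega) P hP u v hPspan rfl hua hbv

end Tiling

def NoncrossingWith {t₁ t₂ n : ℕ} (T₁ : Tiling t₁ n) (T₂ : Tiling t₂ n) : Prop :=
  ∀ X ∈ T₁.faces, ∀ Y ∈ T₂.faces, ∀ e ∈ faceEdges X, ∀ f ∈ faceEdges Y, ¬Crosses e f

theorem noncrossingWith_of_subTri {t₁ t₂ n : ℕ} {𝒯 : Triangulation n} {T₁ : Tiling t₁ n}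
    {T₂ : Tiling t₂ n} (h₁ : SubTri T₁ 𝒯) (h₂ : SubTri T₂ 𝒯) : NoncrossingWith T₁ T₂ := by
  rintro X hX Y hY ⟨a, b⟩ he ⟨c, d⟩ hf hcross
  have hd := T₂.le_of_mem hY (of_mem_faceEdges hf).2.1
  simp only [Crosses] at hcross
  by_cases hfh : (c, d) ∈ hullEdges n
  · rw [mem_hullEdges] at hfh
    omega
  by_cases heh : (a, b) ∈ hullEdges n
  · rw [mem_hullEdges] at heh
    omega
  exact 𝒯.noncross _ (h₁ X hX _ he heh) _ (h₂ Y hY _ hf hfh) hcross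

section NoncrossingTilings

variable {t n : ℕ} {T₁ T₂ : Tiling t n}

theorem Tiling.ext_faces (h : T₁.faces = T₂.faces) : T₁ = T₂ := by
  cases T₁
  cases T₂
  subst h
  rfl

theorem false_of_first_mem_sdiff (ht : 3 ≤ t) (h₁₂ : NoncrossingWith T₁ T₂)
    (h₂₁ : NoncrossingWith T₂ T₁) {X Y : Finset ℕ} (hX : X ∈ T₁.faces) (hY : Y ∈ T₂.faces)
    {m M : ℕ} (hXspan : Spans X m M) (hYspan : Spans Y m M) {c : ℕ} (hcX : c ∈ X)
    (hcY : c ∉ Y) (hbelow : ∀ z < c, z ∈ X ↔ z ∈ Y) : False := by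
  have hmc : m < c := lt_of_le_of_ne (mem_Icc.1 (hXspan.2.2 hcX)).1
    fun h => hcY (h ▸ hYspan.1)
  have hcM : c < M := lt_of_le_of_ne (mem_Icc.1 (hXspan.2.2 hcX)).2
    fun h => hcY (h ▸ hYspan.2.1)
  obtain ⟨u, c', hXuc, -, huc, hcc', hc'c⟩ :=
    exists_consecutive_between hXspan.1 hcX (Nat.le_sub_one_of_lt hmc)
      (Nat.sub_one_lt_of_lt hmc) le_rfl (fun z _ => by omega)
  obtain rfl : c = c' := le_antisymm hcc' hc'c
  have huY : u ∈ Y := (hbelow u (by omega)).1 hXuc.1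
  obtain ⟨u', v, hYuv, hu'u, hu'u', huv, hvM⟩ :=
    exists_consecutive_between huY hYspan.2.1 le_rfl (lt_add_one u) (by omega)
      (fun z _ => by omega)
  obtain rfl : u = u' := le_antisymm hu'u hu'u'
  have hcv : c < v := by
    rcases lt_trichotomy v c with hvc | rfl | hvc
    · have := hXuc.2.2.2 v ((hbelow v hvc).2 hYuv.2.1)
      omega
    · exact absurd hYuv.2.1 hcY
    · exact hvc
  have hvX : v ∈ X := by
    rcases hvM.eq_or_lt with rfl | hvM
    · exact hXspan.2.1
    have hcross : ∀ f ∈ faceEdges X, ¬Crosses (u, v) f ∧ ¬Crosses f (u, v) :=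
      fun f hf => ⟨h₂₁ Y hY X hX _ hYuv.mem_faceEdges f hf,
        h₁₂ X hX Y hY f hf _ hYuv.mem_faceEdges⟩
    exact (mem_of_separates hcross hcX hXspan.2.1 (Or.inl ⟨by omega, hcv, Or.inr hvM⟩)).2
  have hsub := T₁.subset_Icc_of_modEq ht hX hXuc.1 hvX hcX (by omega) hcv
    (T₂.modEq_of_mem_faceEdges ht hY hYuv.mem_faceEdges)
  have := mem_Icc.1 (hsub hXspan.1)
  have := mem_Icc.1 (hsub hXspan.2.1)
  obtain ⟨z, hz, hzuv⟩ := hYuv.exists_lt_or_lt (by rw [T₂.size Y hY]; omega)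
  have := mem_Icc.1 (hYspan.2.2 hz)
  omega

theorem eq_of_spans (ht : 3 ≤ t) (h₁₂ : NoncrossingWith T₁ T₂) (h₂₁ : NoncrossingWith T₂ T₁)
    {X Y : Finset ℕ} (hX : X ∈ T₁.faces) (hY : Y ∈ T₂.faces) {m M : ℕ}
    (hXspan : Spans X m M) (hYspan : Spans Y m M) : X = Y := by
  by_contra hne
  have hdiff : ∃ c, ¬(c ∈ X ↔ c ∈ Y) := by
    by_contra! h
    exact hne (ext h)
  have hbelow (z : ℕ) (hz : z < Nat.find hdiff) : z ∈ X ↔ z ∈ Y :=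
    not_not.1 (Nat.find_min hdiff hz)
  have hfirst := Nat.find_spec hdiff
  by_cases hc : Nat.find hdiff ∈ X
  · exact false_of_first_mem_sdiff ht h₁₂ h₂₁ hX hY hXspan hYspan hc (by tauto) hbelow
  · exact false_of_first_mem_sdiff ht h₂₁ h₁₂ hY hX hYspan hXspan (by tauto) hc
      fun z hz => (hbelow z hz).symm

theorem faces_subset (ht : 3 ≤ t) (h₁₂ : NoncrossingWith T₁ T₂)
    (h₂₁ : NoncrossingWith T₂ T₁) : T₁.faces ⊆ T₂.faces := by
  intro S hS
  have hcard := T₁.size S hS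
  have hne : S.Nonempty := card_pos.1 (by omega)
  have hspan : Spans S (S.min' hne) (S.max' hne) :=
    ⟨S.min'_mem hne, S.max'_mem hne, fun z hz => mem_Icc.2 ⟨S.min'_le z hz, S.le_max' z hz⟩⟩
  have hlen : S.min' hne + 2 ≤ S.max' hne := by
    have := card_le_card hspan.2.2
    rw [Nat.card_Icc] at this
    omega
  have hedge := hspan.mem_faceEdges (by omega)
  obtain ⟨P, hP, hPspan⟩ := T₂.exists_face_spans_of_chord ht hlen (T₁.le_of_mem hS hspan.2.1)
    (fun Y hY f hf => ⟨h₁₂ S hS Y hY _ hedge f hf, h₂₁ Y hY S hS f hf _ hedge⟩)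
    (T₁.modEq_of_spans ht hS hspan)
  rwa [eq_of_spans ht h₁₂ h₂₁ hS hP hspan hPspan]

end NoncrossingTilings

/-- Any triangulation of a convex polygon on `n+2` points contains at most one
`t`-gonal tiling as a subgraph. -/
theorem stmt11 (t n : ℕ) (ht : 3 ≤ t) (𝒯 : Triangulation n)
    (T1 T2 : Tiling t n) (h1 : SubTri T1 𝒯) (h2 : SubTri T2 𝒯) : T1 = T2 := by
  have h₁₂ := noncrossingWith_of_subTri h1 h2
  have h₂₁ := noncrossingWith_of_subTri h2 h1
  exact Tiling.ext_faces ((faces_subset ht h₁₂ h₂₁).antisymm (faces_subset ht h₂₁ h₁₂))
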